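/- Let X_1, ..., X_n be i.i.d. Bernoulli(t) random variables with 0 < t < 1, and let 0 ≤ κ ≤ κ' ≤ n. Then for any m ≤ n, the map k ↦ P(Σ_{l=1}^{m} X_l = 0 | Σ_{l=1}^{n} X_l ≤ k) is non-increasing in k; that is, P(Σ_{l=1}^{m} X_l = 0 | Σ_{l=1}^{n} X_l ≤ κ) ≥ P(Σ_{l=1}^{m} X_l = 0 | Σ_{l=1}^{n} X_l ≤ κ'). -/

import Mathlib

open Finset in
lemma choose_cross (n m : ℕ) {r d : ℕ} (h : r ≤ d) :
    (n-m).choose d * n.choose r ≤ (n-m).choose r * n.choose d := by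
  induction d, h using Nat.le_induction with
  | base => rw [mul_comm]
  | succ d hrd ih =>
    apply Nat.le_of_mul_le_mul_right _ (Nat.succ_pos d)
    calc (n-m).choose (d+1) * n.choose r * (d+1)
        = ((n-m).choose (d+1) * (d+1)) * n.choose r := by ring
      _ = ((n-m).choose d * (n-m-d)) * n.choose r := by rw [Nat.choose_succ_right_eq]
      _ = ((n-m).choose d * n.choose r) * (n-m-d) := by ring
      _ ≤ ((n-m).choose r * n.choose d) * (n-d) := Nat.mul_le_mul ih (by omega)
      _ = (n-m).choose r * (n.choose d * (n-d)) := by ring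
      _ = (n-m).choose r * (n.choose (d+1) * (d+1)) := by rw [Nat.choose_succ_right_eq]
      _ = (n-m).choose r * n.choose (d+1) * (d+1) := by ring

open Finset in
lemma card_filter_le_fin (n m : ℕ) (hm : m ≤ n) :
    (univ.filter fun i : Fin n => m ≤ (i:ℕ)).card = n - m := by
  have h2 : (univ.filter fun i : Fin n => (i:ℕ) < m) =
      (Finset.range m).attachFin (fun a ha => lt_of_lt_of_le (Finset.mem_range.1 ha) hm) := by
    ext i; simp [Finset.mem_attachFin]
  have h1 := Finset.card_filter_add_card_filter_not (s := (univ : Finset (Fin n)))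
      (p := fun i : Fin n => (i:ℕ) < m)
  rw [h2, Finset.card_attachFin, Finset.card_range, Finset.card_univ, Fintype.card_fin] at h1
  have h3 : (univ.filter fun i : Fin n => ¬ (i:ℕ) < m)
      = (univ.filter fun i : Fin n => m ≤ (i:ℕ)) := by
    ext i; simp [Nat.not_lt]
  rw [h3] at h1
  omega

open ProbabilityTheory Finset in
/-- For i.i.d. Bernoulli(t) variables, the conditional probability that the first `m`
variables all vanish, given that the total number of successes is at most `k`, is
non-increasing in the threshold `k`. -/
theorem stmt17 {Ω : Type*} [MeasurableSpace Ω] (μ : MeasureTheory.Measure Ω)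
    [MeasureTheory.IsProbabilityMeasure μ]
    (n m κ κ' : ℕ) (hm : m ≤ n) (hκ : κ ≤ κ') (t : ℝ) (ht0 : 0 < t) (ht1 : t < 1)
    (X : Fin n → Ω → ℕ)
    (hmeas : ∀ i, Measurable (X i))
    (hindep : iIndepFun X μ)
    (hrange : ∀ i, ∀ ω, X i ω ≤ 1)
    (hBer : ∀ i, μ {ω | X i ω = 1} = ENNReal.ofReal t)
    (hpos : μ {ω | ∑ i, X i ω ≤ κ} ≠ 0) :
    (μ[|{ω | ∑ i, X i ω ≤ κ}]) {ω | ∀ i : Fin n, (i : ℕ) < m → X i ω = 0} ≥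
      (μ[|{ω | ∑ i, X i ω ≤ κ'}]) {ω | ∀ i : Fin n, (i : ℕ) < m → X i ω = 0} := by
  classical
  set p := ENNReal.ofReal t with hp
  set q := ENNReal.ofReal (1-t) with hq
  set A : Set Ω := {ω | ∀ i : Fin n, (i : ℕ) < m → X i ω = 0} with hA
  set B : ℕ → Set Ω := fun k => {ω | ∑ i, X i ω ≤ k} with hB
  set w : ℕ → ENNReal := fun j => p ^ j * q ^ (n - j) with hw
  -- Bernoulli marginals
  have hq1 : ∀ i, μ {ω | X i ω = 0} = q := by
    intro i
    have hset : {ω | X i ω = 0} = {ω | X i ω = 1}ᶜ := by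
      ext ω; have := hrange i ω
      simp only [Set.mem_setOf_eq, Set.mem_compl_iff]; omega
    have hm1 : MeasurableSet {ω | X i ω = 1} := hmeas i (measurableSet_singleton 1)
    rw [hset, MeasureTheory.prob_compl_eq_one_sub hm1, hBer i, hq,
      ENNReal.ofReal_sub _ ht0.le, ENNReal.ofReal_one]
  -- atoms
  set E : Finset (Fin n) → Set Ω :=
    fun T => {ω | ∀ i, X i ω = if i ∈ T then 1 else 0} with hE
  have hEinter : ∀ T, E T = ⋂ i, (X i) ⁻¹' {if i ∈ T then 1 else 0} := by
    intro T; ext ω; simp [hE, Set.mem_iInter]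
  have hEmeas : ∀ T, MeasurableSet (E T) := by
    intro T; rw [hEinter]
    exact MeasurableSet.iInter fun i => hmeas i (measurableSet_singleton _)
  have hEmeasure : ∀ T : Finset (Fin n), μ (E T) = w T.card := by
    intro T
    rw [hEinter, hindep.meas_iInter
      (fun i => ⟨{if i ∈ T then 1 else 0}, measurableSet_singleton _, rfl⟩)]
    have hterm : ∀ i, μ ((X i) ⁻¹' {if i ∈ T then 1 else 0}) = if i ∈ T then p else q := by
      intro i; by_cases hi : i ∈ T <;> simp only [hi, if_true, if_false]
      · rw [show (X i) ⁻¹' {1} = {ω | X i ω = 1} from rfl, hBer i]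
      · rw [show (X i) ⁻¹' {0} = {ω | X i ω = 0} from rfl, hq1 i]
    rw [Finset.prod_congr rfl (fun i _ => hterm i), Finset.prod_ite, Finset.prod_const,
      Finset.prod_const]
    have e1 : Finset.univ.filter (fun i => i ∈ T) = T := by ext i; simp
    have e2 : Finset.univ.filter (fun i => i ∉ T) = Tᶜ := by ext i; simp
    rw [e1, e2, Finset.card_compl, Fintype.card_fin]
  -- sum equals card of success set
  have hsum : ∀ ω, (∑ i, X i ω) = (Finset.univ.filter fun i => X i ω = 1).card := by
    intro ω; rw [Finset.card_filter]
    refine Finset.sum_congr rfl fun i _ => ?_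
    by_cases h : X i ω = 1
    · simp [h]
    · have h0 : X i ω = 0 := by have := hrange i ω; omega
      simp [h, h0]
  have hmemE : ∀ ω, ω ∈ E (Finset.univ.filter fun i => X i ω = 1) := by
    intro ω i
    show X i ω = if i ∈ Finset.univ.filter (fun i => X i ω = 1) then 1 else 0
    simp only [Finset.mem_filter, Finset.mem_univ, true_and]
    by_cases h : X i ω = 1
    · simp [h]
    · have h0 : X i ω = 0 := by have := hrange i ω; omega
      simp [h, h0]
  have hfilter_eq : ∀ T ω, ω ∈ E T → (Finset.univ.filter fun i => X i ω = 1) = T := by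
    intro T ω hωT
    ext i
    have h1 : X i ω = if i ∈ T then 1 else 0 := hωT i
    by_cases hi : i ∈ T <;> simp [Finset.mem_filter, h1, hi]
  have hdisj : ∀ T U : Finset (Fin n), T ≠ U → Disjoint (E T) (E U) := by
    intro T U hTU
    rw [Set.disjoint_left]
    intro ω hT hU
    exact hTU ((hfilter_eq T ω hT).symm.trans (hfilter_eq U ω hU))
  -- decomposition of events defined by the success set
  have hmeasP : ∀ (k : ℕ) (H' : Finset (Fin n)),
      μ {ω | (Finset.univ.filter fun i => X i ω = 1).card ≤ k ∧
              (Finset.univ.filter fun i => X i ω = 1) ⊆ H'}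
        = ∑ T ∈ Finset.univ.filter (fun T : Finset (Fin n) => T.card ≤ k ∧ T ⊆ H'),
            μ (E T) := by
    intro k H'
    have hunion : {ω | (Finset.univ.filter fun i => X i ω = 1).card ≤ k ∧
              (Finset.univ.filter fun i => X i ω = 1) ⊆ H'}
        = ⋃ T ∈ Finset.univ.filter (fun T : Finset (Fin n) => T.card ≤ k ∧ T ⊆ H'), E T := by
      ext ω
      simp only [Set.mem_setOf_eq, Set.mem_iUnion, Finset.mem_filter, Finset.mem_univ,
        true_and, exists_prop]
      constructor
      · intro h; exact ⟨_, h, hmemE ω⟩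
      · rintro ⟨T, hPT, hωT⟩; rw [hfilter_eq T ω hωT]; exact hPT
    rw [hunion, MeasureTheory.measure_biUnion_finset
      (fun T _ U _ hTU => hdisj T U hTU) (fun T _ => hEmeas T)]
  -- counting lemma
  have hcount : ∀ (k : ℕ) (H : Finset (Fin n)),
      (∑ T ∈ Finset.univ.filter (fun T : Finset (Fin n) => T.card ≤ k ∧ T ⊆ H), μ (E T))
        = ∑ j ∈ Finset.range (k+1), (H.card.choose j : ENNReal) * w j := by
    intro k H
    have hsplit : Finset.univ.filter (fun T : Finset (Fin n) => T.card ≤ k ∧ T ⊆ H)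
        = (Finset.range (k+1)).biUnion (fun j => Finset.powersetCard j H) := by
      ext T
      simp only [Finset.mem_filter, Finset.mem_univ, true_and, Finset.mem_biUnion,
        Finset.mem_range, Finset.mem_powersetCard, Nat.lt_succ_iff]
      constructor
      · rintro ⟨h1, h2⟩; exact ⟨T.card, h1, h2, rfl⟩
      · rintro ⟨j, hj, hTH, rfl⟩; exact ⟨hj, hTH⟩
    rw [hsplit, Finset.sum_biUnion]
    · refine Finset.sum_congr rfl fun j _ => ?_
      calc ∑ T ∈ Finset.powersetCard j H, μ (E T)
          = ∑ _T ∈ Finset.powersetCard j H, w j := by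
            refine Finset.sum_congr rfl fun T hT => ?_
            rw [hEmeasure T, (Finset.mem_powersetCard.1 hT).2]
        _ = (H.card.choose j : ENNReal) * w j := by
            rw [Finset.sum_const, Finset.card_powersetCard, nsmul_eq_mul]
    · intro j _ j' _ hjj'
      simp only [Function.onFun]
      rw [Finset.disjoint_left]
      intro T hT hT'
      exact hjj' ((Finset.mem_powersetCard.1 hT).2.symm.trans (Finset.mem_powersetCard.1 hT').2)
  -- measure of B k
  have hμB : ∀ k, μ (B k) = ∑ j ∈ Finset.range (k+1), (n.choose j : ENNReal) * w j := by
    intro k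
    have h1 : B k = {ω | (Finset.univ.filter fun i => X i ω = 1).card ≤ k ∧
        (Finset.univ.filter fun i => X i ω = 1) ⊆ Finset.univ} := by
      ext ω
      simp only [hB, Set.mem_setOf_eq, Finset.subset_univ, and_true, hsum ω]
    rw [h1, hmeasP k Finset.univ, hcount, Finset.card_univ, Fintype.card_fin]
  set H : Finset (Fin n) := Finset.univ.filter (fun i => m ≤ (i:ℕ)) with hH
  have hHcard : H.card = n - m := card_filter_le_fin n m hm
  -- measure of B k ∩ A
  have hμAB : ∀ k, μ (B k ∩ A)
      = ∑ j ∈ Finset.range (k+1), ((n-m).choose j : ENNReal) * w j := by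
    intro k
    have h1 : B k ∩ A = {ω | (Finset.univ.filter fun i => X i ω = 1).card ≤ k ∧
        (Finset.univ.filter fun i => X i ω = 1) ⊆ H} := by
      ext ω
      simp only [hB, hA, Set.mem_inter_iff, Set.mem_setOf_eq, hsum ω]
      constructor
      · rintro ⟨h1, h2⟩
        refine ⟨h1, fun i hi => ?_⟩
        simp only [Finset.mem_filter, Finset.mem_univ, true_and] at hi
        simp only [hH, Finset.mem_filter, Finset.mem_univ, true_and]
        by_contra hlt
        rw [h2 i (by omega)] at hi
        omega
      · rintro ⟨h1, h2⟩
        refine ⟨h1, fun i hi => ?_⟩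
        by_contra hne
        have hone : X i ω = 1 := by have := hrange i ω; omega
        have := h2 (by simp [hone] : i ∈ Finset.univ.filter fun i => X i ω = 1)
        simp only [hH, Finset.mem_filter, Finset.mem_univ, true_and] at this
        omega
    rw [h1, hmeasP k H, hcount, hHcard]
  -- the cross inequality
  have key : (∑ j ∈ Finset.range (κ'+1), ((n-m).choose j : ENNReal) * w j)
        * (∑ i ∈ Finset.range (κ+1), (n.choose i : ENNReal) * w i)
      ≤ (∑ j ∈ Finset.range (κ+1), ((n-m).choose j : ENNReal) * w j)
        * (∑ i ∈ Finset.range (κ'+1), (n.choose i : ENNReal) * w i) := by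
    have hsplit : ∀ f : ℕ → ENNReal, ∑ j ∈ Finset.range (κ'+1), f j
        = ∑ j ∈ Finset.range (κ+1), f j + ∑ j ∈ Finset.Ico (κ+1) (κ'+1), f j := by
      intro f
      rw [Finset.range_eq_Ico, Finset.range_eq_Ico]
      exact (Finset.sum_Ico_consecutive f (Nat.zero_le _) (by omega)).symm
    rw [hsplit (fun j => ((n-m).choose j : ENNReal) * w j),
      hsplit (fun i => (n.choose i : ENNReal) * w i), add_mul, mul_add]
    refine add_le_add_right ?_ _
    rw [Finset.sum_mul_sum, Finset.sum_mul_sum, Finset.sum_comm]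
    refine Finset.sum_le_sum fun r hr => Finset.sum_le_sum fun d hd => ?_
    have hrd : r ≤ d := by
      have h1 := Finset.mem_range.1 hr
      have h2 := (Finset.mem_Ico.1 hd).1
      omega
    have hnat := choose_cross n m hrd
    calc ((n-m).choose d : ENNReal) * w d * ((n.choose r : ENNReal) * w r)
        = (((n-m).choose d : ENNReal) * (n.choose r : ENNReal)) * (w d * w r) := by ring
      _ ≤ (((n-m).choose r : ENNReal) * (n.choose d : ENNReal)) * (w d * w r) := by
          refine mul_le_mul_left ?_ _
          exact_mod_cast hnat
      _ = ((n-m).choose r : ENNReal) * w r * ((n.choose d : ENNReal) * w d) := by ring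
  -- assemble
  have hSmeas : Measurable fun ω => ∑ i, X i ω :=
    Finset.measurable_sum Finset.univ fun i _ => hmeas i
  have hBmeas : ∀ k, MeasurableSet (B k) := fun k => hSmeas measurableSet_Iic
  have hBsub : B κ ⊆ B κ' := fun ω h => le_trans h hκ
  have hx0 : μ (B κ) ≠ 0 := hpos
  have hxt : μ (B κ) ≠ ⊤ := MeasureTheory.measure_ne_top μ _
  have hy0 : μ (B κ') ≠ 0 := fun h =>
    hx0 (le_antisymm (h ▸ MeasureTheory.measure_mono hBsub) (zero_le))
  have hmain : μ (B κ' ∩ A) * μ (B κ) ≤ μ (B κ ∩ A) * μ (B κ') := by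
    rw [hμAB, hμAB, hμB, hμB]; exact key
  have hfinal : μ (B κ' ∩ A) / μ (B κ') ≤ μ (B κ ∩ A) / μ (B κ) := by
    rw [ENNReal.le_div_iff_mul_le (Or.inl hx0) (Or.inl hxt), div_eq_mul_inv,
      mul_right_comm, ← div_eq_mul_inv]
    exact ENNReal.div_le_of_le_mul hmain
  show (μ[|B κ]) A ≥ (μ[|B κ']) A
  rw [ProbabilityTheory.cond_apply (hBmeas κ), ProbabilityTheory.cond_apply (hBmeas κ')]
  calc (μ (B κ'))⁻¹ * μ (B κ' ∩ A) = μ (B κ' ∩ A) / μ (B κ') := by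
        rw [div_eq_mul_inv, mul_comm]
    _ ≤ μ (B κ ∩ A) / μ (B κ) := hfinal
    _ = (μ (B κ))⁻¹ * μ (B κ ∩ A) := by rw [div_eq_mul_inv, mul_comm]
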